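/- Let G be a finite simple connected graph of order n ≥ 2 with diameter d = diam(G). Then ψ(G) ≤ n − d + 1. -/

import Mathlib

/-!
Take a shortest path `u = p₀, p₁, …, p_d = v` between two vertices at distance `d = diam G`,
and let `W` consist of all vertices except the `d - 1` internal vertices `p₁, …, p_{d-1}`.
Two vertices `a, b ∈ W` are doubly resolved by the pair `a, b` itself. Two internal vertices
`pᵢ, pⱼ` are doubly resolved by `u, v`, since the differences are `i - j` and `j - i`. Finally,
if an internal vertex `a` and a vertex `b ∈ W` were resolved neither by `b, u` nor by `b, v`,
adding the two equalities would give `2 d(a,b) = d(u,v) - d(u,b) - d(b,v) ≤ 0`.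
-/

open SimpleGraph

/-- Vertices `u, v` are doubly resolved by vertices `x, y` if
`d(u,x) − d(v,x) ≠ d(u,y) − d(v,y)`. -/
def doublyResolves {V : Type*} (G : SimpleGraph V) (x y u v : V) : Prop :=
  (G.dist u x : ℤ) - (G.dist v x : ℤ) ≠ (G.dist u y : ℤ) - (G.dist v y : ℤ)

/-- A set `W` of vertices is a doubly resolving set for `G` if every two distinct
vertices of `G` are doubly resolved by some two vertices of `W`. -/
def IsDoublyResolvingSet {V : Type*} (G : SimpleGraph V) (W : Set V) : Prop :=
  ∀ u v : V, u ≠ v → ∃ x ∈ W, ∃ y ∈ W, doublyResolves G x y u v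

/-- The doubly resolving number `ψ(G)`: the minimum cardinality of a doubly
resolving set for `G`. -/
noncomputable def psi {V : Type*} (G : SimpleGraph V) : ℕ :=
  sInf {k | ∃ W : Finset V, W.card = k ∧ IsDoublyResolvingSet G ↑W}

namespace SimpleGraph

variable {V : Type*} {G : SimpleGraph V} {u v : V}

namespace Walk

variable {p : G.Walk u v}

lemma dist_getVert_left (hp : p.length = G.dist u v) (i : ℕ) :
    G.dist u (p.getVert i) = min i p.length := by
  rw [← length_eq_dist_of_subwalk hp (p.isSubwalk_take i), take_length]

lemma dist_getVert_right (hp : p.length = G.dist u v) (i : ℕ) :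
    G.dist (p.getVert i) v = p.length - i := by
  rw [← length_eq_dist_of_subwalk hp (p.isSubwalk_drop i), drop_length]

lemma dist_getVert_add_dist_getVert (hp : p.length = G.dist u v) (i : ℕ) :
    G.dist u (p.getVert i) + G.dist (p.getVert i) v = G.dist u v := by
  rw [dist_getVert_left hp, dist_getVert_right hp, ← hp]
  omega

variable [DecidableEq V]

def internalVertices (p : G.Walk u v) : Finset V :=
  (Finset.Ioo 0 p.length).image p.getVert

lemma mem_internalVertices {x : V} :
    x ∈ p.internalVertices ↔ ∃ i, (0 < i ∧ i < p.length) ∧ p.getVert i = x := by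
  simp [internalVertices]

lemma card_internalVertices (hp : p.length = G.dist u v) :
    p.internalVertices.card = p.length - 1 := by
  rw [internalVertices, Finset.card_image_of_injOn, Nat.card_Ioo, Nat.sub_zero]
  intro i hi j hj hij
  have hi := (Finset.mem_Ioo.mp hi).2.le
  have hj := (Finset.mem_Ioo.mp hj).2.le
  have := congrArg (G.dist u) hij
  rw [dist_getVert_left hp, dist_getVert_left hp] at this
  omega

lemma start_notMem_internalVertices (hp : p.length = G.dist u v) : u ∉ p.internalVertices := by
  rw [mem_internalVertices]
  rintro ⟨i, ⟨hi0, hil⟩, hiu⟩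
  have := dist_getVert_left hp i
  rw [hiu, dist_self] at this
  omega

lemma end_notMem_internalVertices (hp : p.length = G.dist u v) : v ∉ p.internalVertices := by
  rw [mem_internalVertices]
  rintro ⟨i, ⟨hi0, hil⟩, hiv⟩
  have := dist_getVert_right hp i
  rw [hiv, dist_self] at this
  omega

end Walk

end SimpleGraph

section DoublyResolving

variable {V : Type*} {G : SimpleGraph V} {u v : V}

lemma doublyResolves.symm {x y a b : V} (h : doublyResolves G x y a b) :
    doublyResolves G x y b a := by
  unfold doublyResolves at *
  omega

lemma doublyResolves_self (hG : G.Connected) {a b : V} (hab : a ≠ b) :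
    doublyResolves G a b a b := by
  have := hG.pos_dist_of_ne hab
  unfold doublyResolves
  rw [dist_self, dist_self, dist_comm (u := b)]
  omega

lemma doublyResolves_of_dist_ne {a b : V} (ha : G.dist u a + G.dist a v = G.dist u v)
    (hb : G.dist u b + G.dist b v = G.dist u v) (hab : G.dist u a ≠ G.dist u b) :
    doublyResolves G u v a b := by
  unfold doublyResolves
  rw [dist_comm (u := a), dist_comm (u := b)]
  omega

lemma doublyResolves_or_doublyResolves_of_dist_add_dist_eq (hG : G.Connected) {a b : V}
    (ha : G.dist u a + G.dist a v = G.dist u v) (hab : a ≠ b) :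
    doublyResolves G b u a b ∨ doublyResolves G b v a b := by
  by_contra! h
  obtain ⟨hu, hv⟩ := h
  unfold doublyResolves at hu hv
  have hpos := hG.pos_dist_of_ne hab
  have htri : G.dist u v ≤ G.dist u b + G.dist b v := hG.dist_triangle
  rw [dist_self, dist_comm (u := a) (v := u), dist_comm (u := b) (v := u)] at hu
  rw [dist_self] at hv
  omega

theorem isDoublyResolvingSet_compl_internalVertices [DecidableEq V] (hG : G.Connected)
    {p : G.Walk u v} (hp : p.length = G.dist u v) :
    IsDoublyResolvingSet G (↑p.internalVertices)ᶜ := by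
  have hu : u ∈ (↑p.internalVertices : Set V)ᶜ := p.start_notMem_internalVertices hp
  have hv : v ∈ (↑p.internalVertices : Set V)ᶜ := p.end_notMem_internalVertices hp
  have resolve_internal : ∀ a b, a ≠ b → a ∈ p.internalVertices → b ∉ p.internalVertices →
      ∃ x ∈ (↑p.internalVertices : Set V)ᶜ, ∃ y ∈ (↑p.internalVertices : Set V)ᶜ,
        doublyResolves G x y a b := by
    intro a b hab ha hb
    obtain ⟨i, -, rfl⟩ := Walk.mem_internalVertices.mp ha
    rcases doublyResolves_or_doublyResolves_of_dist_add_dist_eq hG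
      (p.dist_getVert_add_dist_getVert hp i) hab with h | h
    · exact ⟨b, hb, u, hu, h⟩
    · exact ⟨b, hb, v, hv, h⟩
  intro a b hab
  by_cases ha : a ∈ p.internalVertices <;> by_cases hb : b ∈ p.internalVertices
  · obtain ⟨i, ⟨-, hi⟩, rfl⟩ := Walk.mem_internalVertices.mp ha
    obtain ⟨j, ⟨-, hj⟩, rfl⟩ := Walk.mem_internalVertices.mp hb
    refine ⟨u, hu, v, hv, doublyResolves_of_dist_ne (p.dist_getVert_add_dist_getVert hp i)
      (p.dist_getVert_add_dist_getVert hp j) ?_⟩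
    rw [p.dist_getVert_left hp, p.dist_getVert_left hp]
    exact fun hij ↦ hab (by rw [show i = j by omega])
  · exact resolve_internal a b hab ha hb
  · obtain ⟨x, hx, y, hy, h⟩ := resolve_internal b a hab.symm hb ha
    exact ⟨x, hx, y, hy, h.symm⟩
  · exact ⟨a, ha, b, hb, doublyResolves_self hG hab⟩

lemma psi_le_card {W : Finset V} (hW : IsDoublyResolvingSet G ↑W) : psi G ≤ W.card :=
  Nat.sInf_le ⟨W, rfl, hW⟩

end DoublyResolving

theorem stmt_5_general {V : Type*} [Fintype V] (G : SimpleGraph V) (hG : G.Connected) :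
    psi G ≤ Fintype.card V - G.diam + 1 := by
  classical
  have := hG.nonempty
  obtain ⟨u, v, huv⟩ := G.exists_dist_eq_diam
  obtain ⟨p, hp⟩ := hG.exists_walk_length_eq_dist u v
  have hW : IsDoublyResolvingSet G ↑p.internalVerticesᶜ := by
    simpa using isDoublyResolvingSet_compl_internalVertices hG hp
  calc psi G ≤ p.internalVerticesᶜ.card := psi_le_card hW
    _ = Fintype.card V - (G.diam - 1) := by
      rw [Finset.card_compl, p.card_internalVertices hp, hp, huv]
    _ ≤ Fintype.card V - G.diam + 1 := by omega

/-- For a connected graph of order `n ≥ 2` with diameter `d`, `ψ(G) ≤ n − d + 1`. -/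
theorem stmt_5 {V : Type*} [Fintype V] (G : SimpleGraph V) (hG : G.Connected)
    (hn : 2 ≤ Fintype.card V) :
    psi G ≤ Fintype.card V - G.diam + 1 :=
  stmt_5_general G hG
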